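/- arXiv:2412.13622 — 3 statements merged into one kernel-verified Lean document; each statement's English description precedes it below -/
import Mathlib

section
/- For every instance I, the greedy choice function output Ch*(I) satisfies maximal diversity and balanced representation: there exists a rank-maximal matching M of size at most q that attains balanced representation and whose set of covered students equals Ch*(I). -/
open Classical

/-- An instance `I = (S, q, ≻, T, τ, η)`: a finite set of students with a strict
total order (priority, modeled by a linear order where `s' < s` means `s ≻ s'`),
a positive capacity `q`, a finite set of types `T`, a type assignment `τ`, and
ranked quotas `η t j` for ranks `j ∈ {1,…,r}`. -/
structure Inst where
  S : Type
  T : Type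
  [fS : Fintype S]
  [dS : DecidableEq S]
  [lS : LinearOrder S]
  [fT : Fintype T]
  [dT : DecidableEq T]
  q : ℕ
  qpos : 0 < q
  r : ℕ
  τ : S → Finset T
  η : T → ℕ → ℕ

attribute [instance] Inst.fS Inst.dS Inst.lS Inst.fT Inst.dT

/-- `s ≻ s'` : student `s` has strictly higher priority than `s'`. -/
def Inst.prio (I : Inst) (s s' : I.S) : Prop := s' < s

/-- A (potential) reserved seat: a type (`none` = the general type `t₀`),
a rank, and an index. -/
abbrev SeatT (I : Inst) := Option I.T × ℕ × ℕ

/-- The rank of a seat. -/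
def seatRank (I : Inst) (v : SeatT I) : ℕ := v.2.1

/-- The type of a seat (`none` = general type `t₀`). -/
def seatType (I : Inst) (v : SeatT I) : Option I.T := v.1

/-- Seats actually present in the ranked reservation graph: for each type `t`, rank
`1 ≤ j ≤ r` and index `i < η t j` a seat, and `q` general seats of rank `r`. -/
def SeatValid (I : Inst) (v : SeatT I) : Prop :=
  match v.1 with
  | some t => 1 ≤ v.2.1 ∧ v.2.1 ≤ I.r ∧ v.2.2 < I.η t v.2.1
  | none => v.2.1 = I.r ∧ v.2.2 < I.q

/-- There is an edge between student `s` and a seat of type `t` iff `t ∈ τ s` or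
`t` is the general type `t₀`. -/
def EdgeOK (I : Inst) (s : I.S) (v : SeatT I) : Prop :=
  match v.1 with
  | some t => t ∈ I.τ s
  | none => True

/-- A matching in the ranked reservation graph: a set of edges of `G` in which
every student and every seat appears at most once. -/
def IsMatching (I : Inst) (M : Finset (I.S × SeatT I)) : Prop :=
  (∀ e ∈ M, SeatValid I e.2 ∧ EdgeOK I e.1 e.2) ∧
  (∀ e ∈ M, ∀ e' ∈ M, e.1 = e'.1 → e = e') ∧
  (∀ e ∈ M, ∀ e' ∈ M, e.2 = e'.2 → e = e')

/-- `S_M`: the set of students covered by the matching `M`. -/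
def covered (I : Inst) (M : Finset (I.S × SeatT I)) : Finset I.S := M.image Prod.fst

/-- `x_i`: the number of edges of rank `i` in `M` (the `i`-th entry of the
signature `ρ(M)`). -/
def sig (I : Inst) (M : Finset (I.S × SeatT I)) (i : ℕ) : ℕ :=
  (M.filter (fun e => seatRank I e.2 = i)).card

/-- `ρ(M) <lex ρ(M')` : the signature of `M'` is lexicographically strictly
better than that of `M`. -/
def SigLT (I : Inst) (M M' : Finset (I.S × SeatT I)) : Prop :=
  ∃ k, 1 ≤ k ∧ k ≤ I.r ∧ (∀ i, 1 ≤ i → i < k → sig I M i = sig I M' i) ∧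
    sig I M k < sig I M' k

/-- A matching of size at most `q` is rank-maximal if its signature is
lexicographically ≥ that of every matching of size at most `q`. -/
def RankMaximal (I : Inst) (M : Finset (I.S × SeatT I)) : Prop :=
  IsMatching I M ∧ M.card ≤ I.q ∧
    ∀ M', IsMatching I M' → M'.card ≤ I.q → ¬ SigLT I M M'

/-- `U`: the set of groups (type combinations actually occurring among students). -/
def groups (I : Inst) : Finset (Finset I.T) := Finset.univ.image I.τ

/-- `S_u`: the set of students of group `u`. -/
def Su (I : Inst) (u : Finset I.T) : Finset I.S :=
  Finset.univ.filter (fun s => I.τ s = u)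

/-- `|M_u|`: the number of students of group `u` covered by `M`. -/
def Mu (I : Inst) (M : Finset (I.S × SeatT I)) (u : Finset I.T) : ℕ :=
  ((covered I M).filter (fun s => I.τ s = u)).card

/-- `min_{u ∈ U} |M_u| / |S_u|` (as `WithTop ℚ`; it is `⊤` iff `U = ∅`). -/
noncomputable def minRatio (I : Inst) (M : Finset (I.S × SeatT I)) : WithTop ℚ :=
  ((groups I).image (fun u => ((Mu I M u : ℚ) / ((Su I u).card : ℚ)))).min

/-- `M` attains balanced representation: `M` is rank-maximal of size at most `q`
and maximizes `min_{u∈U} |M_u|/|S_u|` over all such matchings. -/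
def BalancedRep (I : Inst) (M : Finset (I.S × SeatT I)) : Prop :=
  RankMaximal I M ∧ ∀ M', RankMaximal I M' → minRatio I M' ≤ minRatio I M

/-- The greedy choice function `Ch*`: process the students in decreasing order of
priority, adding the current student `s` whenever some matching of size at most `q`
that is rank-maximal and attains balanced representation covers `S* ∪ {s}`. -/
noncomputable def ChStar (I : Inst) : Finset I.S :=
  ((Finset.sort (Finset.univ : Finset I.S) (· ≤ ·)).reverse).foldl
    (fun A s =>
      if ∃ M, BalancedRep I M ∧ insert s A ⊆ covered I M then insert s A else A) ∅

/-- Non-wastefulness of a chosen set: `|S*| = min (|S|, q)`. -/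
def NonWasteful (I : Inst) (A : Finset I.S) : Prop :=
  A.card = min (Fintype.card I.S) I.q

/-- Maximal diversity of a chosen set: some rank-maximal matching of size at most
`q` covers only students of `S*`. -/
def MaxDiversity (I : Inst) (A : Finset I.S) : Prop :=
  ∃ M, RankMaximal I M ∧ covered I M ⊆ A

/-- Balanced representation of a chosen set: some matching in `𝕄` attaining
balanced representation covers all of `S*`. -/
def BalancedRepSet (I : Inst) (A : Finset I.S) : Prop :=
  ∃ M, BalancedRep I M ∧ A ⊆ covered I M

/-- Justified envy-freeness: no `s ∉ S*`, `s' ∈ S*` with `s ≻ s'` such that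
`(S* ∪ {s}) \ {s'}` satisfies both maximal diversity and balanced representation. -/
def JEF (I : Inst) (A : Finset I.S) : Prop :=
  ¬ ∃ s s', s ∉ A ∧ s' ∈ A ∧ I.prio s s' ∧
    MaxDiversity I (insert s A \ {s'}) ∧ BalancedRepSet I (insert s A \ {s'})

/-- `I` is valid w.r.t. a target vector `δ`: some rank-maximal matching of size at
most `q` has `|M_u| ≥ δ_u` for every group `u ∈ U`. -/
def ValidWrt (I : Inst) (δ : Finset I.T → ℕ) : Prop :=
  ∃ M, RankMaximal I M ∧ ∀ u ∈ groups I, δ u ≤ Mu I M u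

/-- The max-min ratio `α(I)`: the maximum over rank-maximal matchings `M` of
size at most `q` of `min_{u∈U} |M_u|/|S_u|`. -/
noncomputable def alphaQ (I : Inst) : ℚ :=
  let cands : Finset ℚ :=
    ((Finset.Icc 0 (Fintype.card I.S)) ×ˢ groups I).image
      (fun p => (p.1 : ℚ) / ((Su I p.2).card : ℚ))
  WithBot.unbotD 0 ((cands.filter
      (fun x : ℚ => ∃ M, RankMaximal I M ∧ minRatio I M = (x : WithTop ℚ))).max)

/-- The crucial vector `δ*` : `δ*_u = ⌊α(I)·|S_u|⌋`. -/
noncomputable def deltaStar (I : Inst) (u : Finset I.T) : ℕ :=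
  ⌊alphaQ I * ((Su I u).card : ℚ)⌋₊

/-- The `k` highest-priority students of `A`. -/
def topK (I : Inst) (A : Finset I.S) (k : ℕ) : Finset I.S :=
  A.filter (fun s => (A.filter (fun s' => s ≤ s')).card ≤ k)

/-! ### The flow network -/

/-- Nodes of the flow network: `Sum.inl 0` = source `a`, `Sum.inl 1` = sink `b`,
`Sum.inl 2` = the capacity node `Q`; group nodes, type nodes (`none` = `t₀`),
and rank nodes `t^i` (rank value `i+1` for `i : Fin r`). -/
abbrev Node (I : Inst) := Fin 3 ⊕ Finset I.T ⊕ Option I.T ⊕ (Option I.T × Fin I.r)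

def nSrc (I : Inst) : Node I := Sum.inl 0
def nSink (I : Inst) : Node I := Sum.inl 1
def nQ (I : Inst) : Node I := Sum.inl 2
def nGrp (I : Inst) (u : Finset I.T) : Node I := Sum.inr (Sum.inl u)
def nTyp (I : Inst) (t : Option I.T) : Node I := Sum.inr (Sum.inr (Sum.inl t))
def nRnk (I : Inst) (t : Option I.T) (i : Fin I.r) : Node I :=
  Sum.inr (Sum.inr (Sum.inr (t, i)))

/-- Quotas including the general type: `η_{t₀}^r = q` and `η_{t₀}^j = 0` for `j < r`. -/
def ηgen (I : Inst) (t : Option I.T) (j : ℕ) : ℕ :=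
  match t with
  | some t => I.η t j
  | none => if j = I.r then I.q else 0

/-- Capacities of the flow network (capacity `0` = no edge). -/
def cap (I : Inst) : Node I → Node I → ℕ := fun x y =>
  match x, y with
  | Sum.inl a, Sum.inl b => if a = 2 ∧ b = 1 then I.q else 0
  | Sum.inl a, Sum.inr (Sum.inl u) => if a = 0 then (Su I u).card else 0
  | Sum.inr (Sum.inl u), Sum.inr (Sum.inr (Sum.inl (some t))) =>
      ((Su I u).filter (fun s => t ∈ I.τ s)).card
  | Sum.inr (Sum.inl u), Sum.inr (Sum.inr (Sum.inl none)) => (Su I u).card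
  | Sum.inr (Sum.inr (Sum.inl t)), Sum.inr (Sum.inr (Sum.inr (t', i))) =>
      if t = t' then ηgen I t' ((i : ℕ) + 1) else 0
  | Sum.inr (Sum.inr (Sum.inr (t, i))), Sum.inl a =>
      if a = 2 then ηgen I t ((i : ℕ) + 1) else 0
  | _, _ => 0

/-- Costs of the flow network: the edge `t → t^i` has cost equal to the rank
`i+1`; all other edges have cost `0`. -/
def cost (I : Inst) : Node I → Node I → ℕ := fun x y =>
  match x, y with
  | Sum.inr (Sum.inr (Sum.inl t)), Sum.inr (Sum.inr (Sum.inr (t', i))) =>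
      if t = t' then (i : ℕ) + 1 else 0
  | _, _ => 0

/-- A flow: nonnegative, within capacities, and conserved at every node other
than the source and the sink. -/
def IsFlow (I : Inst) (f : Node I → Node I → ℝ) : Prop :=
  (∀ x y, 0 ≤ f x y) ∧ (∀ x y, f x y ≤ (cap I x y : ℝ)) ∧
  (∀ x : Node I, x ≠ nSrc I → x ≠ nSink I → (∑ y, f y x) = ∑ y, f x y)

/-- The value of a flow: `Σ_u f(a, u)`. -/
noncomputable def flowVal (I : Inst) (f : Node I → Node I → ℝ) : ℝ :=
  ∑ u : Finset I.T, f (nSrc I) (nGrp I u)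

/-- The cost of a flow: `Σ_e cost(e) · f(e)`. -/
noncomputable def flowCost (I : Inst) (f : Node I → Node I → ℝ) : ℝ :=
  ∑ x : Node I, ∑ y : Node I, (cost I x y : ℝ) * f x y

/-- A maximum flow. -/
def IsMaxFlow (I : Inst) (f : Node I → Node I → ℝ) : Prop :=
  IsFlow I f ∧ ∀ g, IsFlow I g → flowVal I g ≤ flowVal I f

/-- A minimum-cost maximum flow. -/
def IsMinCostMaxFlow (I : Inst) (f : Node I → Node I → ℝ) : Prop :=
  IsMaxFlow I f ∧ ∀ g, IsMaxFlow I g → flowCost I f ≤ flowCost I g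

/-- The flow `f_M` induced by a matching `M`. -/
noncomputable def inducedFlow (I : Inst) (M : Finset (I.S × SeatT I)) :
    Node I → Node I → ℝ := fun x y =>
  match x, y with
  | Sum.inl a, Sum.inl b => if a = 2 ∧ b = 1 then (M.card : ℝ) else 0
  | Sum.inl a, Sum.inr (Sum.inl u) => if a = 0 then (Mu I M u : ℝ) else 0
  | Sum.inr (Sum.inl u), Sum.inr (Sum.inr (Sum.inl t)) =>
      ((M.filter (fun e => I.τ e.1 = u ∧ seatType I e.2 = t)).card : ℝ)
  | Sum.inr (Sum.inr (Sum.inl t)), Sum.inr (Sum.inr (Sum.inr (t', i))) =>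
      if t = t' then
        ((M.filter (fun e => seatType I e.2 = t ∧ seatRank I e.2 = (i : ℕ) + 1)).card : ℝ)
      else 0
  | Sum.inr (Sum.inr (Sum.inr (t, i))), Sum.inl a =>
      if a = 2 then
        ((M.filter (fun e => seatType I e.2 = t ∧ seatRank I e.2 = (i : ℕ) + 1)).card : ℝ)
      else 0
  | _, _ => 0

/-! ### Alternating and augmenting paths -/

/-- The edge set of a path encoded by its list of students `a₀,…` and list of
seats `v₀,…` (edges `(aₖ, vₖ)` and `(aₖ₊₁, vₖ)`). -/
def edgesOf (I : Inst) (students : List I.S) (seats : List (SeatT I)) :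
    Finset (I.S × SeatT I) :=
  (students.zip seats).toFinset ∪ (students.tail.zip seats).toFinset

/-- Symmetric difference `M ⊕ P = (M \ P) ∪ (P \ M)`. -/
def symmDiffM (I : Inst) (M P : Finset (I.S × SeatT I)) : Finset (I.S × SeatT I) :=
  (M \ P) ∪ (P \ M)

/-- An alternating path w.r.t. `M` from an uncovered student to a covered student:
students `a₀, …, aₙ` and seats `v₀, …, vₙ₋₁`, with `(aₖ, vₖ) ∉ M` edges of `G`
and `(aₖ₊₁, vₖ) ∈ M`. -/
structure AltPath (I : Inst) (M : Finset (I.S × SeatT I)) where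
  students : List I.S
  seats : List (SeatT I)
  len : students.length = seats.length + 1
  nodupS : students.Nodup
  nodupV : seats.Nodup
  notM : ∀ e ∈ students.zip seats, e ∉ M ∧ SeatValid I e.2 ∧ EdgeOK I e.1 e.2
  inM : ∀ e ∈ students.tail.zip seats, e ∈ M

/-- The edge set of an alternating path. -/
def AltPath.edges {I : Inst} {M : Finset (I.S × SeatT I)} (P : AltPath I M) :
    Finset (I.S × SeatT I) :=
  edgesOf I P.students P.seats

/-- An augmenting path w.r.t. `M` from an uncovered student to an uncovered seat:
students `a₀, …, aₙ` and seats `v₀, …, vₙ`, with `(aₖ, vₖ) ∉ M` edges of `G`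
and `(aₖ₊₁, vₖ) ∈ M`. -/
structure AugPath (I : Inst) (M : Finset (I.S × SeatT I)) where
  students : List I.S
  seats : List (SeatT I)
  len : students.length = seats.length
  nodupS : students.Nodup
  nodupV : seats.Nodup
  notM : ∀ e ∈ students.zip seats, e ∉ M ∧ SeatValid I e.2 ∧ EdgeOK I e.1 e.2
  inM : ∀ e ∈ students.tail.zip seats, e ∈ M

/-- The edge set of an augmenting path. -/
def AugPath.edges {I : Inst} {M : Finset (I.S × SeatT I)} (P : AugPath I M) :
    Finset (I.S × SeatT I) :=
  edgesOf I P.students P.seats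

/-- The instance obtained from `I` by restricting the student set to `X`. -/
@[reducible] def restrict (I : Inst) (X : Finset I.S) : Inst :=
  { S := {s : I.S // s ∈ X}
    T := I.T
    fS := inferInstance
    dS := inferInstance
    lS := inferInstance
    fT := I.fT
    dT := I.dT
    q := I.q
    qpos := I.qpos
    r := I.r
    τ := fun s => I.τ s.1
    η := I.η }

/-!
There are only finitely many matchings, since every seat index is bounded by a quota. Hence a
rank-maximal matching exists (maximize the signature lexicographically), and among the
rank-maximal ones some `M` maximizes the min ratio. The greedy run keeps its current set covered
by such a matching; at the end let `M` be one. A student of `M` was compatible, at his turn,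
with the set chosen so far (a subset of the final one, both covered by `M`), so he was taken:
the output is exactly the set covered by `M`. The priority order plays no role.
-/

section Greedy

variable {α : Type*} [DecidableEq α] (P : Finset α → Prop) [DecidablePred P]

def greedyStep (A : Finset α) (s : α) : Finset α :=
  if P (insert s A) then insert s A else A

lemma subset_foldl_greedyStep (l : List α) (A : Finset α) : A ⊆ l.foldl (greedyStep P) A := by
  induction l generalizing A with
  | nil => exact subset_rfl
  | cons s l ih =>
    refine subset_trans ?_ (ih _)
    unfold greedyStep
    split_ifs
    exacts [Finset.subset_insert s A, subset_rfl]

lemma foldl_greedyStep_of (l : List α) {A : Finset α} (hA : P A) :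
    P (l.foldl (greedyStep P) A) := by
  induction l generalizing A with
  | nil => exact hA
  | cons s l ih =>
    refine ih ?_
    unfold greedyStep
    split_ifs with h
    exacts [h, hA]

lemma mem_foldl_greedyStep (hP : ∀ ⦃B C⦄, B ⊆ C → P C → P B) {l : List α} {s : α}
    (hs : s ∈ l) (A : Finset α) (hins : P (insert s (l.foldl (greedyStep P) A))) :
    s ∈ l.foldl (greedyStep P) A := by
  induction l generalizing A with
  | nil => simp at hs
  | cons x l ih =>
    rcases List.mem_cons.1 hs with rfl | hs
    · have hle := subset_foldl_greedyStep P l (greedyStep P A s)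
      have hkeep : P (insert s A) :=
        hP (Finset.insert_subset_insert s ((subset_foldl_greedyStep P [s] A).trans hle)) hins
      exact hle (by simp [greedyStep, hkeep])
    · exact ih hs _ hins

theorem exists_cov_eq_foldl_greedyStep {ι : Type*} (cov : ι → Finset α) (good : ι → Prop)
    (hgood : ∃ i, good i) (l : List α) (hl : ∀ a, a ∈ l) :
    ∃ i, good i ∧ cov i = l.foldl (greedyStep fun B => ∃ i, good i ∧ B ⊆ cov i) ∅ := by
  set P : Finset α → Prop := fun B => ∃ i, good i ∧ B ⊆ cov i
  have hP : ∀ ⦃B C⦄, B ⊆ C → P C → P B := fun B C hBC ⟨i, hi, hC⟩ => ⟨i, hi, hBC.trans hC⟩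
  obtain ⟨i₀, hi₀⟩ := hgood
  obtain ⟨i, hi, hsub⟩ := foldl_greedyStep_of P l (A := ∅) ⟨i₀, hi₀, Finset.empty_subset _⟩
  refine ⟨i, hi, Finset.Subset.antisymm (fun a ha => ?_) hsub⟩
  exact mem_foldl_greedyStep P hP (hl a) ∅ ⟨i, hi, Finset.insert_subset ha hsub⟩

end Greedy

section Existence

variable (I : Inst)

lemma SeatValid.rank_le_and_index_lt_ηgen {v : SeatT I} (hv : SeatValid I v) :
    v.2.1 ≤ I.r ∧ v.2.2 < ηgen I v.1 v.2.1 := by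
  obtain ⟨_ | t, j, i⟩ := v
  · obtain ⟨rfl, hi⟩ := hv
    simpa [ηgen] using hi
  · exact ⟨hv.2.1, hv.2.2⟩

lemma finite_setOf_seatValid : {v : SeatT I | SeatValid I v}.Finite := by
  set B := (Finset.univ ×ˢ Finset.range (I.r + 1)).sup fun p : Option I.T × ℕ => ηgen I p.1 p.2
  refine ((Set.finite_univ (α := Option I.T)).prod
    ((Set.finite_Iic I.r).prod (Set.finite_Iio B))).subset ?_
  rintro ⟨o, j, i⟩ hv
  obtain ⟨hj, hi⟩ := SeatValid.rank_le_and_index_lt_ηgen I hv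
  have hB : ηgen I o j ≤ B :=
    Finset.le_sup (f := fun p : Option I.T × ℕ => ηgen I p.1 p.2) (b := (o, j))
      (by simpa [Nat.lt_succ_iff] using hj)
  simp only [Set.mem_prod, Set.mem_univ, Set.mem_Iic, Set.mem_Iio, true_and]
  exact ⟨hj, hi.trans_le hB⟩

lemma finite_setOf_isMatching : {M | IsMatching I M}.Finite := by
  set E := ((Set.finite_univ (α := I.S)).prod (finite_setOf_seatValid I)).toFinset
  refine E.powerset.finite_toSet.subset fun M hM => ?_
  rw [Finset.mem_coe, Finset.mem_powerset]
  intro e he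
  simpa [E] using (hM.1 e he).1

/-- Index `i` holds the number of edges of rank `i + 1`. -/
def sigLex (M : Finset (I.S × SeatT I)) : Lex (Fin I.r → ℕ) :=
  toLex fun i => sig I M (i + 1)

variable {I} in
lemma SigLT.sigLex_lt {M M' : Finset (I.S × SeatT I)} (h : SigLT I M M') :
    sigLex I M < sigLex I M' := by
  obtain ⟨k, hk1, hkr, heq, hlt⟩ := h
  refine ⟨⟨k - 1, by omega⟩, fun j hj => heq _ (by omega) ?_, ?_⟩
  · have : (j : ℕ) < k - 1 := hj
    omega
  · simpa [sigLex, Nat.sub_add_cancel hk1] using hlt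

lemma exists_rankMaximal : ∃ M, RankMaximal I M := by
  obtain ⟨M, ⟨hM, hcard⟩, hmax⟩ := Set.exists_max_image {M | IsMatching I M ∧ M.card ≤ I.q}
    (sigLex I) ((finite_setOf_isMatching I).subset fun _ h => h.1)
    ⟨∅, by simp [IsMatching]⟩
  exact ⟨M, hM, hcard, fun M' hM' hcard' hlt => (hmax M' ⟨hM', hcard'⟩).not_gt hlt.sigLex_lt⟩

lemma exists_balancedRep : ∃ M, BalancedRep I M := by
  obtain ⟨M, hM, hmax⟩ := Set.exists_max_image {M | RankMaximal I M} (minRatio I)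
    ((finite_setOf_isMatching I).subset fun _ h => h.1) (exists_rankMaximal I)
  exact ⟨M, hM, hmax⟩

end Existence

/-- `Ch*(I)` satisfies maximal diversity and balanced representation:
some rank-maximal matching of size at most `q` attaining balanced representation
covers exactly the students of `Ch*(I)`. -/
theorem chStar_maxDiversity_balanced (I : Inst) :
    ∃ M : Finset (I.S × SeatT I), BalancedRep I M ∧ covered I M = ChStar I :=
  exists_cov_eq_foldl_greedyStep (covered I) (BalancedRep I) (exists_balancedRep I) _
    fun s => by simp
end

section
/- Let I be an instance with |S| ≥ q whose crucial vector δ* satisfies Σ_{u∈U} δ*_u = q. Then every subset S* ⊆ S with |S*| ≤ q that satisfies non-wastefulness, maximal diversity, balanced representation, and justified envy-freeness consists, for each group u ∈ U, of exactly the δ*_u highest-priority (with respect to ≻) students of S_u. -/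
open Classical

/-!
Let `M` be a balanced rank-maximal matching covering `S*`. Since `α(I)` is the minimum ratio of
`M`, every group gets `|M_u| ≥ δ*_u` students, so `q = Σ δ*_u ≤ Σ |M_u| = |S_M| ≤ q`: hence
`S* = S_M` and `|S*_u| = δ*_u` for every group. Exchanging two students of the same group changes
neither the signature nor any `|M_u|`, so a selected student of `S_u` ranked below an unselected one
would give justified envy; thus `S*_u` is an upper set of `S_u` of size `δ*_u`.
-/

open Finset

section Permutation

variable {I : Inst}

lemma edgeOK_congr {a b : I.S} (h : I.τ a = I.τ b) (v : SeatT I) :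
    EdgeOK I a v ↔ EdgeOK I b v := by
  simp only [EdgeOK, h]

def mapStudents (σ : Equiv.Perm I.S) (M : Finset (I.S × SeatT I)) : Finset (I.S × SeatT I) :=
  M.map (σ.prodCongr (Equiv.refl (SeatT I))).toEmbedding

variable (σ : Equiv.Perm I.S) (M : Finset (I.S × SeatT I))

lemma card_mapStudents : (mapStudents σ M).card = M.card := card_map _

lemma sig_mapStudents (i : ℕ) : sig I (mapStudents σ M) i = sig I M i := by
  simp only [sig, mapStudents, filter_map, card_map]
  rfl

lemma sigLT_mapStudents_iff (M' : Finset (I.S × SeatT I)) :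
    SigLT I (mapStudents σ M) M' ↔ SigLT I M M' := by
  simp only [SigLT, sig_mapStudents]

lemma covered_mapStudents : covered I (mapStudents σ M) = (covered I M).map σ.toEmbedding := by
  ext s
  simp [covered, mapStudents]

variable {σ M} (hσ : ∀ s, I.τ (σ s) = I.τ s)
include hσ

lemma isMatching_mapStudents (hM : IsMatching I M) : IsMatching I (mapStudents σ M) := by
  obtain ⟨hedge, hstudent, hseat⟩ := hM
  simp only [IsMatching, mapStudents, forall_mem_map, Equiv.coe_toEmbedding,
    Equiv.prodCongr_apply, Prod.map, Equiv.coe_refl, id, EmbeddingLike.apply_eq_iff_eq,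
    Prod.mk.injEq]
  refine ⟨fun e he => ?_, fun e he e' he' h => ?_, fun e he e' he' h => ?_⟩
  · exact ⟨(hedge e he).1, (edgeOK_congr (hσ e.1) e.2).2 (hedge e he).2⟩
  · rw [hstudent e he e' he' h]; simp
  · rw [hseat e he e' he' h]; simp

lemma Mu_mapStudents (u : Finset I.T) : Mu I (mapStudents σ M) u = Mu I M u := by
  simp only [Mu, covered_mapStudents, filter_map, card_map, Function.comp_def,
    Equiv.coe_toEmbedding, hσ]

lemma minRatio_mapStudents : minRatio I (mapStudents σ M) = minRatio I M := by
  simp only [minRatio, Mu_mapStudents hσ]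

lemma rankMaximal_mapStudents (hM : RankMaximal I M) : RankMaximal I (mapStudents σ M) :=
  ⟨isMatching_mapStudents hσ hM.1, (card_mapStudents σ M).trans_le hM.2.1,
    fun M' hM' hcard => (sigLT_mapStudents_iff σ M M').not.2 (hM.2.2 M' hM' hcard)⟩

lemma balancedRep_mapStudents (hM : BalancedRep I M) : BalancedRep I (mapStudents σ M) :=
  ⟨rankMaximal_mapStudents hσ hM.1, fun M' hM' => (hM.2 M' hM').trans_eq (minRatio_mapStudents hσ).symm⟩

end Permutation

lemma tau_swap_apply {I : Inst} {x y : I.S} (h : I.τ x = I.τ y) (s : I.S) :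
    I.τ (Equiv.swap x y s) = I.τ s := by
  rw [Equiv.swap_apply_def]
  split_ifs with hx hy
  · rw [hx, h]
  · rw [hy, h]
  · rfl

lemma Finset.map_swap_of_mem_of_notMem {α : Type*} [DecidableEq α] {s : Finset α} {i j : α}
    (hi : i ∈ s) (hj : j ∉ s) : s.map (Equiv.swap i j).toEmbedding = insert j s \ {i} := by
  rw [map_eq_image]
  exact coe_injective (by push_cast; exact Equiv.image_swap_of_mem_of_notMem hi hj)

section Counting

variable {I : Inst}

lemma card_Su_pos {u : Finset I.T} (hu : u ∈ groups I) : 0 < (Su I u).card := by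
  obtain ⟨s, -, rfl⟩ := mem_image.1 hu
  exact card_pos.2 ⟨s, mem_filter.2 ⟨mem_univ s, rfl⟩⟩

lemma exists_minRatio_eq (hne : (groups I).Nonempty) (M : Finset (I.S × SeatT I)) :
    ∃ u ∈ groups I, minRatio I M = (((Mu I M u : ℚ) / (Su I u).card : ℚ) : WithTop ℚ) := by
  obtain ⟨a, ha⟩ := min_of_nonempty
    (hne.image fun u => (Mu I M u : ℚ) / (Su I u).card)
  obtain ⟨u, hu, rfl⟩ := mem_image.1 (mem_of_min ha)
  exact ⟨u, hu, ha⟩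

lemma Mu_le_card (M : Finset (I.S × SeatT I)) (u : Finset I.T) : Mu I M u ≤ Fintype.card I.S :=
  (card_filter_le _ _).trans (card_le_univ _)

/-- The candidate set in the definition of `alphaQ` contains every attained minimum ratio, so
its maximum is the minimum ratio of any balanced matching. -/
lemma minRatio_eq_alphaQ (hne : (groups I).Nonempty) {M : Finset (I.S × SeatT I)}
    (hM : BalancedRep I M) : minRatio I M = alphaQ I := by
  obtain ⟨u, hu, hmin⟩ := exists_minRatio_eq hne M
  set v : ℚ := (Mu I M u : ℚ) / (Su I u).card
  set F := (((Icc 0 (Fintype.card I.S)) ×ˢ groups I).image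
      (fun p => (p.1 : ℚ) / ((Su I p.2).card : ℚ))).filter
      (fun x : ℚ => ∃ M, RankMaximal I M ∧ minRatio I M = (x : WithTop ℚ))
  have hvF : v ∈ F := mem_filter.2 ⟨mem_image.2 ⟨(Mu I M u, u),
    mem_product.2 ⟨mem_Icc.2 ⟨Nat.zero_le _, Mu_le_card M u⟩, hu⟩, rfl⟩, M, hM.1, hmin⟩
  have hmax : F.max = v := by
    refine le_antisymm (Finset.max_le fun x hx => ?_) (le_max hvF)
    obtain ⟨-, M', hM', hx⟩ := mem_filter.1 hx
    exact_mod_cast hx ▸ hmin ▸ hM.2 M' hM'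
  change minRatio I M = (WithBot.unbotD 0 F.max : ℚ)
  rw [hmin, hmax, WithBot.unbotD_coe]

lemma deltaStar_le_Mu {M : Finset (I.S × SeatT I)} (hM : BalancedRep I M) {u : Finset I.T}
    (hu : u ∈ groups I) : deltaStar I u ≤ Mu I M u := by
  have hα : alphaQ I ≤ (Mu I M u : ℚ) / (Su I u).card := by
    rw [← WithTop.coe_le_coe, ← minRatio_eq_alphaQ ⟨u, hu⟩ hM]
    exact min_le (mem_image_of_mem _ hu)
  have hpos : (0 : ℚ) < (Su I u).card := by exact_mod_cast card_Su_pos hu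
  calc deltaStar I u ≤ ⌊(Mu I M u : ℚ)⌋₊ := Nat.floor_mono ((le_div_iff₀ hpos).1 hα)
    _ = Mu I M u := Nat.floor_natCast _

lemma card_covered_eq_sum_Mu (M : Finset (I.S × SeatT I)) :
    (covered I M).card = ∑ u ∈ groups I, Mu I M u :=
  card_eq_sum_card_fiberwise fun s _ => mem_image_of_mem _ (mem_univ s)

lemma card_covered_eq_and_Mu_eq_deltaStar (hsum : ∑ u ∈ groups I, deltaStar I u = I.q)
    {M : Finset (I.S × SeatT I)} (hM : BalancedRep I M) :
    (covered I M).card = I.q ∧ ∀ u ∈ groups I, Mu I M u = deltaStar I u := by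
  have hle : ∀ u ∈ groups I, deltaStar I u ≤ Mu I M u := fun u hu => deltaStar_le_Mu hM hu
  have hcard : (covered I M).card ≤ I.q := card_image_le.trans hM.1.2.1
  have hsum_le := sum_le_sum hle
  rw [← card_covered_eq_sum_Mu, hsum] at hsum_le
  have hcard_eq : (covered I M).card = I.q := le_antisymm hcard hsum_le
  refine ⟨hcard_eq, fun u hu => ((sum_eq_sum_iff_of_le hle).1 ?_ u hu).symm⟩
  rw [hsum, ← card_covered_eq_sum_Mu, hcard_eq]

end Counting

variable {I : Inst}

lemma eq_topK_of_lt {B C : Finset I.S} {k : ℕ} (hBC : B ⊆ C) (hcard : B.card = k)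
    (hlt : ∀ x ∈ C, x ∉ B → ∀ y ∈ B, x < y) : B = topK I C k := by
  ext x
  simp only [topK, mem_filter]
  constructor
  · intro hx
    refine ⟨hBC hx, hcard ▸ card_le_card fun y hy => ?_⟩
    obtain ⟨hyC, hxy⟩ := mem_filter.1 hy
    by_contra hyB
    exact (hlt y hyC hyB x hx).not_ge hxy
  · rintro ⟨hxC, hxk⟩
    by_contra hxB
    have hsub : insert x B ⊆ C.filter (x ≤ ·) := by
      intro y hy
      rcases mem_insert.1 hy with rfl | hyB
      · exact mem_filter.2 ⟨hxC, le_rfl⟩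
      · exact mem_filter.2 ⟨hBC hyB, (hlt x hxC hxB y hyB).le⟩
    have := card_le_card hsub
    rw [card_insert_of_notMem hxB, hcard] at this
    omega

lemma lt_of_jef {A : Finset I.S} (hJ : JEF I A) {M : Finset (I.S × SeatT I)}
    (hM : BalancedRep I M) (hA : covered I M = A) {x y : I.S} (hτ : I.τ y = I.τ x)
    (hx : x ∉ A) (hy : y ∈ A) : x < y := by
  by_contra hxy
  have hyx : y < x := lt_of_le_of_ne (not_lt.1 hxy) (ne_of_mem_of_not_mem hy hx)
  have hσ := tau_swap_apply hτ
  have hcov : covered I (mapStudents (Equiv.swap y x) M) = insert x A \ {y} := by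
    rw [covered_mapStudents, hA, map_swap_of_mem_of_notMem hy hx]
  exact hJ ⟨x, y, hx, hy, hyx, ⟨_, rankMaximal_mapStudents hσ hM.1, hcov.le⟩,
    ⟨_, balancedRep_mapStudents hσ hM, hcov.ge⟩⟩

theorem good_set_eq_topK_general (I : Inst) (hS : I.q ≤ Fintype.card I.S)
    (hsum : ∑ u ∈ groups I, deltaStar I u = I.q)
    (A : Finset I.S)
    (h1 : NonWasteful I A)
    (h3 : BalancedRepSet I A) (h4 : JEF I A) :
    ∀ u ∈ groups I, A.filter (fun s => I.τ s = u) = topK I (Su I u) (deltaStar I u) := by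
  intro u hu
  obtain ⟨M, hM, hAM⟩ := h3
  obtain ⟨hcard, hMu⟩ := card_covered_eq_and_Mu_eq_deltaStar hsum hM
  have hA : covered I M = A :=
    (eq_of_subset_of_card_le hAM (by rw [hcard, h1, min_eq_right hS])).symm
  refine eq_topK_of_lt (fun s hs => ?_) ?_ fun x hx hxA y hy => ?_
  · exact mem_filter.2 ⟨mem_univ s, (mem_filter.1 hs).2⟩
  · rw [← hMu u hu, Mu, hA]
  · obtain ⟨hyA, hyu⟩ := mem_filter.1 hy
    have hxu : I.τ x = u := (mem_filter.1 hx).2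
    exact lt_of_jef h4 hM hA (hyu.trans hxu.symm) (fun h => hxA (mem_filter.2 ⟨h, hxu⟩)) hyA

/-- if `|S| ≥ q` and `Σ_{u∈U} δ*_u = q`, then every subset `S* ⊆ S`
with `|S*| ≤ q` satisfying the four properties consists, for each group `u`, of
exactly the `δ*_u` highest-priority students of `S_u`. -/
theorem good_set_eq_topK (I : Inst) (hS : I.q ≤ Fintype.card I.S)
    (hsum : ∑ u ∈ groups I, deltaStar I u = I.q)
    (A : Finset I.S) (hq : A.card ≤ I.q)
    (h1 : NonWasteful I A) (h2 : MaxDiversity I A)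
    (h3 : BalancedRepSet I A) (h4 : JEF I A) :
    ∀ u ∈ groups I, A.filter (fun s => I.τ s = u) = topK I (Su I u) (deltaStar I u) :=
  good_set_eq_topK_general I hS hsum A h1 h3 h4
end

section
/- The greedy choice function does not satisfy substitutability: there exist an instance I = (S, q, ≻, T, τ, η), a subset Y ⊆ S, and two distinct students s₁, s₂ ∈ S \ Y such that s₂ ∉ Ch*(I|_{Y ∪ {s₂}}) but s₂ ∈ Ch*(I|_{Y ∪ {s₁, s₂}}), where I|_X denotes the instance obtained from I by restricting the student set to X (keeping q, the restriction of ≻ to X, T, τ, and η). A concrete witness: q = 4, a single rank r = 1, two types t₁ and t₂ each with quota η^1 = 4, students s₁₁ ≻ s₁₂ ≻ s₁₃ ≻ s₁₄ ≻ s₁₅ ≻ s₁₆ ≻ s₂₁ ≻ s₂₂ ≻ s₂₃ with τ(s₁ⱼ) = {t₁} and τ(s₂ⱼ) = {t₂}; with Y = {s₁₁, s₁₂, s₁₃, s₁₄, s₁₅, s₂₁, s₂₂, s₂₃}, s₁ = s₁₆ and s₂ = s₁₃, one has Ch*(I|_Y) = {s₁₁, s₁₂, s₂₁, s₂₂} (so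 s₁₃ is rejected) while Ch*(I|_{Y ∪ {s₁₆}}) = {s₁₁, s₁₂, s₁₃, s₂₁} (so s₁₃ is selected). -/
open Classical

/-! Six students `5 ≻ 4 ≻ ⋯ ≻ 0`, capacity `3`, a single rank and no reserved seats, so that the
rank-maximal matchings are exactly the matchings filling the three general seats. Students `3, 4, 5`
form one group and `0, 1, 2` the other. Among `{5, 4, 2, 1, 0}` the groups have sizes `2` and `3`,
and balanced representation forces exactly one student of the first group into the matching: after
admitting `5`, the greedy rule rejects `4`. Adding student `3` makes both groups of size `3`, so one
or two students of the first group are equally balanced, and `4` is admitted after `5`. -/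

-- Under `open Classical` these predicates would otherwise get `Classical.propDecidable`, which
-- `decide` cannot evaluate.
instance (I : Inst) (v : SeatT I) : Decidable (SeatValid I v) :=
  match v with
  | (some t, j, i) => inferInstanceAs (Decidable (1 ≤ j ∧ j ≤ I.r ∧ i < I.η t j))
  | (none, j, i) => inferInstanceAs (Decidable (j = I.r ∧ i < I.q))

instance (I : Inst) (s : I.S) (v : SeatT I) : Decidable (EdgeOK I s v) :=
  match v with
  | (some t, _, _) => inferInstanceAs (Decidable (t ∈ I.τ s))
  | (none, _, _) => inferInstanceAs (Decidable True)

instance (I : Inst) (M : Finset (I.S × SeatT I)) : Decidable (IsMatching I M) :=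
  inferInstanceAs (Decidable ((∀ e ∈ M, SeatValid I e.2 ∧ EdgeOK I e.1 e.2) ∧
    (∀ e ∈ M, ∀ e' ∈ M, e.1 = e'.1 → e = e') ∧
    (∀ e ∈ M, ∀ e' ∈ M, e.2 = e'.2 → e = e')))

open Finset

section Greedy

variable {α : Type*} {g : Finset α → α → Finset α}

lemma subset_foldl_of_subset_step (hg : ∀ A s, A ⊆ g A s) :
    ∀ (l : List α) (A : Finset α), A ⊆ l.foldl g A
  | [], _ => subset_rfl
  | s :: l, A => (hg A s).trans (subset_foldl_of_subset_step hg l (g A s))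

lemma foldl_subset_of_step_subset [DecidableEq α] (hg : ∀ A s, g A s ⊆ insert s A) :
    ∀ (l : List α) (A : Finset α), l.foldl g A ⊆ A ∪ l.toFinset
  | [], A => by simp
  | s :: l, A => calc
      l.foldl g (g A s) ⊆ g A s ∪ l.toFinset := foldl_subset_of_step_subset hg l (g A s)
      _ ⊆ insert s A ∪ l.toFinset := union_subset_union_left (hg A s)
      _ = A ∪ (s :: l).toFinset := by rw [List.toFinset_cons, union_insert, insert_union]

end Greedy

lemma sort_univ_reverse_eq {α : Type*} [Fintype α] [LinearOrder α] {l : List α} (hl : l.Nodup)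
    (huniv : ∀ a, a ∈ l) (hsorted : l.Pairwise (· ≥ ·)) :
    (sort (univ : Finset α) (· ≤ ·)).reverse = l := by
  rw [List.reverse_eq_iff]
  have : (univ : Finset α) = l.reverse.toFinset := by ext; simp [huniv]
  rw [this]
  exact (List.toFinset_sort _ (List.nodup_reverse.2 hl)).2 (List.pairwise_reverse.2 hsorted)

theorem mem_chStar_iff_of_sort_reverse_eq {I : Inst} {a x : I.S} {l : List I.S}
    (hl : (sort (univ : Finset I.S) (· ≤ ·)).reverse = a :: x :: l)
    (ha : ∃ M, BalancedRep I M ∧ {a} ⊆ covered I M) :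
    x ∈ ChStar I ↔ ∃ M, BalancedRep I M ∧ {x, a} ⊆ covered I M := by
  have hnodup : (a :: x :: l).Nodup := hl ▸ List.nodup_reverse.2 (sort_nodup _ _)
  simp only [List.nodup_cons, List.mem_cons, not_or] at hnodup
  unfold ChStar
  rw [hl, List.foldl_cons, List.foldl_cons, insert_empty, if_pos ha]
  split_ifs with hxa
  · refine ⟨fun _ => hxa, fun _ => subset_foldl_of_subset_step ?_ l _ (mem_insert_self x _)⟩
    intro A s; split_ifs <;> simp [subset_insert]
  · refine ⟨fun hx => ?_, fun h => absurd h hxa⟩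
    have := foldl_subset_of_step_subset ?_ l _ hx
    · rw [mem_union, mem_singleton, List.mem_toFinset] at this
      rcases this with rfl | hxl
      exacts [absurd rfl hnodup.1.1, absurd hxl hnodup.2.1]
    · intro A s; split_ifs <;> simp [subset_insert]

section GeneralSeats

variable {I : Inst} {M M' W : Finset (I.S × SeatT I)}

lemma seatRank_eq_of_quotas_zero (hη : ∀ t j, I.η t j = 0) {v : SeatT I}
    (hv : SeatValid I v) : seatRank I v = I.r := by
  obtain ⟨_ | t, j, i⟩ := v
  · exact hv.1
  · have : i < I.η t j := hv.2.2
    rw [hη] at this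
    exact absurd this (Nat.not_lt_zero i)

lemma sig_eq_of_quotas_zero (hη : ∀ t j, I.η t j = 0) (hM : IsMatching I M) (i : ℕ) :
    sig I M i = if i = I.r then M.card else 0 := by
  have hrank : ∀ e ∈ M, seatRank I e.2 = I.r := fun e he =>
    seatRank_eq_of_quotas_zero hη (hM.1 e he).1
  unfold sig
  split_ifs with hi
  · rw [hi, filter_true_of_mem hrank]
  · rw [card_eq_zero, filter_eq_empty_iff]
    exact fun e he h => hi (h ▸ hrank e he)

lemma sigLT_iff_card_lt (hη : ∀ t j, I.η t j = 0) (hr : 1 ≤ I.r) (hM : IsMatching I M)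
    (hM' : IsMatching I M') : SigLT I M M' ↔ M.card < M'.card := by
  simp only [SigLT, sig_eq_of_quotas_zero hη hM, sig_eq_of_quotas_zero hη hM']
  constructor
  · rintro ⟨k, -, -, -, hlt⟩
    split_ifs at hlt
    exacts [hlt, absurd hlt (lt_irrefl 0)]
  · exact fun h => ⟨I.r, hr, le_rfl, fun i _ hi => by simp [hi.ne], by simpa using h⟩

lemma rankMaximal_iff_card_eq (hη : ∀ t j, I.η t j = 0) (hr : 1 ≤ I.r)
    (hW : IsMatching I W) (hWq : W.card = I.q) :
    RankMaximal I M ↔ IsMatching I M ∧ M.card = I.q := by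
  constructor
  · rintro ⟨hM, hq, hmax⟩
    refine ⟨hM, hq.antisymm (not_lt.1 fun hlt => hmax W hW hWq.le ?_)⟩
    exact (sigLT_iff_card_lt hη hr hM hW).2 (hWq ▸ hlt)
  · rintro ⟨hM, hq⟩
    refine ⟨hM, hq.le, fun M' hM' hq' hlt => ?_⟩
    have := (sigLT_iff_card_lt hη hr hM hM').1 hlt
    omega

end GeneralSeats

section Groups

variable {I : Inst} {M : Finset (I.S × SeatT I)} {u v : Finset I.T}

lemma card_covered (hM : IsMatching I M) : (covered I M).card = M.card :=
  card_image_of_injOn fun e he e' he' h => hM.2.1 e he e' he' h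

lemma Mu_le_card_Su : Mu I M u ≤ (Su I u).card :=
  card_le_card fun _ hs => mem_filter.2 ⟨mem_univ _, (mem_filter.1 hs).2⟩

lemma Mu_eq_card_Su_of_subset (h : Su I u ⊆ covered I M) : Mu I M u = (Su I u).card :=
  Mu_le_card_Su.antisymm <| card_le_card fun _ hs => mem_filter.2 ⟨h hs, (mem_filter.1 hs).2⟩

lemma Mu_add_Mu_of_groups_eq_pair (hU : groups I = {u, v}) (huv : u ≠ v) :
    Mu I M u + Mu I M v = (covered I M).card := by
  unfold Mu
  rw [← card_filter_add_card_filter_not (s := covered I M) (fun s => I.τ s = u)]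
  congr 2
  refine filter_congr fun s _ => ?_
  have hs : I.τ s ∈ groups I := mem_image_of_mem _ (mem_univ s)
  rw [hU, mem_insert, mem_singleton] at hs
  rcases hs with hs | hs <;> simp [hs, huv, huv.symm]

lemma minRatio_of_groups_eq_pair (hU : groups I = {u, v}) :
    minRatio I M =
      ↑(min ((Mu I M u : ℚ) / (Su I u).card) ((Mu I M v : ℚ) / (Su I v).card)) := by
  rw [minRatio, hU, image_insert, image_singleton, min_insert, min_singleton, WithTop.coe_min]

end Groups

abbrev I₀ : Inst where
  S := Fin 6
  T := Bool
  q := 3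
  qpos := by norm_num
  r := 1
  τ s := {decide (3 ≤ s)}
  η _ _ := 0

def Y₀ : Finset (Fin 6) := {0, 1, 2, 5}

abbrev J₁ : Inst := restrict I₀ (insert 4 Y₀)

abbrev J₂ : Inst := restrict I₀ (insert 3 (insert 4 Y₀))

def W₁ : Finset (J₁.S × SeatT J₁) :=
  {(⟨5, by decide⟩, (none, 1, 0)), (⟨2, by decide⟩, (none, 1, 1)),
    (⟨1, by decide⟩, (none, 1, 2))}

lemma J₁_sort_reverse : (sort (univ : Finset J₁.S) (· ≤ ·)).reverse =
    [⟨5, by decide⟩, ⟨4, by decide⟩, ⟨2, by decide⟩, ⟨1, by decide⟩, ⟨0, by decide⟩] :=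
  sort_univ_reverse_eq (by decide) (by decide) (by decide)

lemma J₁_rankMaximal_iff {M : Finset (J₁.S × SeatT J₁)} :
    RankMaximal J₁ M ↔ IsMatching J₁ M ∧ M.card = 3 :=
  rankMaximal_iff_card_eq (fun _ _ => rfl) le_rfl (W := W₁) (by decide) (by decide)

lemma J₁_minRatio (M : Finset (J₁.S × SeatT J₁)) :
    minRatio J₁ M = ↑(min ((Mu J₁ M {true} : ℚ) / 2) ((Mu J₁ M {false} : ℚ) / 3)) := by
  rw [minRatio_of_groups_eq_pair (show groups J₁ = {{true}, {false}} by decide),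
    show (Su J₁ {true}).card = 2 by decide, show (Su J₁ {false}).card = 3 by decide]
  norm_num

lemma J₁_Mu_add_Mu {M : Finset (J₁.S × SeatT J₁)} (hM : RankMaximal J₁ M) :
    Mu J₁ M {true} + Mu J₁ M {false} = 3 := by
  obtain ⟨hM, hcard⟩ := J₁_rankMaximal_iff.1 hM
  rw [Mu_add_Mu_of_groups_eq_pair (by decide) (by decide), card_covered hM, hcard]

lemma J₁_minRatio_le {M : Finset (J₁.S × SeatT J₁)} (hM : RankMaximal J₁ M) :
    minRatio J₁ M ≤ ↑(1 / 2 : ℚ) := by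
  have hsum := J₁_Mu_add_Mu hM
  have hle : Mu J₁ M {true} ≤ 2 := Mu_le_card_Su.trans (by decide)
  rw [J₁_minRatio, WithTop.coe_le_coe]
  generalize Mu J₁ M {true} = a, Mu J₁ M {false} = b at *
  obtain rfl : b = 3 - a := by omega
  interval_cases a <;> norm_num

lemma W₁_minRatio : minRatio J₁ W₁ = ↑(1 / 2 : ℚ) := by
  rw [J₁_minRatio, show Mu J₁ W₁ {true} = 1 by decide, show Mu J₁ W₁ {false} = 2 by decide]
  norm_num

lemma W₁_balancedRep : BalancedRep J₁ W₁ :=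
  ⟨J₁_rankMaximal_iff.2 ⟨by decide, by decide⟩,
    fun _ hM => (J₁_minRatio_le hM).trans_eq W₁_minRatio.symm⟩

lemma J₁_not_balancedRep_cover :
    ¬ ∃ M, BalancedRep J₁ M ∧ {⟨4, by decide⟩, ⟨5, by decide⟩} ⊆ covered J₁ M := by
  rintro ⟨M, ⟨hM, hopt⟩, hcov⟩
  have hSu : Su J₁ {true} = {⟨4, by decide⟩, ⟨5, by decide⟩} := by decide
  have htrue : Mu J₁ M {true} = 2 := Mu_eq_card_Su_of_subset (hSu ▸ hcov)
  have hfalse : Mu J₁ M {false} = 1 := by have := J₁_Mu_add_Mu hM; omega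
  have := hopt W₁ W₁_balancedRep.1
  rw [W₁_minRatio, J₁_minRatio, htrue, hfalse, WithTop.coe_le_coe] at this
  norm_num at this

def W₂ : Finset (J₂.S × SeatT J₂) :=
  {(⟨5, by decide⟩, (none, 1, 0)), (⟨4, by decide⟩, (none, 1, 1)),
    (⟨2, by decide⟩, (none, 1, 2))}

lemma J₂_sort_reverse : (sort (univ : Finset J₂.S) (· ≤ ·)).reverse =
    [⟨5, by decide⟩, ⟨4, by decide⟩, ⟨3, by decide⟩, ⟨2, by decide⟩, ⟨1, by decide⟩,
      ⟨0, by decide⟩] :=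
  sort_univ_reverse_eq (by decide) (by decide) (by decide)

lemma J₂_rankMaximal_iff {M : Finset (J₂.S × SeatT J₂)} :
    RankMaximal J₂ M ↔ IsMatching J₂ M ∧ M.card = 3 :=
  rankMaximal_iff_card_eq (fun _ _ => rfl) le_rfl (W := W₂) (by decide) (by decide)

lemma J₂_minRatio (M : Finset (J₂.S × SeatT J₂)) :
    minRatio J₂ M = ↑(min ((Mu J₂ M {true} : ℚ) / 3) ((Mu J₂ M {false} : ℚ) / 3)) := by
  rw [minRatio_of_groups_eq_pair (show groups J₂ = {{true}, {false}} by decide),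
    show (Su J₂ {true}).card = 3 by decide, show (Su J₂ {false}).card = 3 by decide]
  norm_num

lemma J₂_Mu_add_Mu {M : Finset (J₂.S × SeatT J₂)} (hM : RankMaximal J₂ M) :
    Mu J₂ M {true} + Mu J₂ M {false} = 3 := by
  obtain ⟨hM, hcard⟩ := J₂_rankMaximal_iff.1 hM
  rw [Mu_add_Mu_of_groups_eq_pair (by decide) (by decide), card_covered hM, hcard]

lemma J₂_minRatio_le {M : Finset (J₂.S × SeatT J₂)} (hM : RankMaximal J₂ M) :
    minRatio J₂ M ≤ ↑(1 / 3 : ℚ) := by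
  have hsum := J₂_Mu_add_Mu hM
  rw [J₂_minRatio, WithTop.coe_le_coe]
  generalize Mu J₂ M {true} = a, Mu J₂ M {false} = b at *
  obtain rfl : b = 3 - a := by omega
  have : a ≤ 3 := by omega
  interval_cases a <;> norm_num

lemma W₂_balancedRep : BalancedRep J₂ W₂ := by
  refine ⟨J₂_rankMaximal_iff.2 ⟨by decide, by decide⟩,
    fun _ hM => (J₂_minRatio_le hM).trans ?_⟩
  rw [J₂_minRatio, show Mu J₂ W₂ {true} = 2 by decide, show Mu J₂ W₂ {false} = 1 by decide]
  norm_num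

/-- the greedy choice function does not satisfy substitutability:
there are an instance `I`, a set `Y` of students and distinct students
`s₁, s₂ ∉ Y` such that `s₂ ∉ Ch*(I|_{Y ∪ {s₂}})` but `s₂ ∈ Ch*(I|_{Y ∪ {s₁, s₂}})`. -/
theorem chStar_not_substitutable :
    ∃ (I : Inst) (Y : Finset I.S) (s₁ s₂ : I.S),
      s₁ ≠ s₂ ∧ s₁ ∉ Y ∧ s₂ ∉ Y ∧
      (⟨s₂, Finset.mem_insert_self s₂ Y⟩ : (restrict I (insert s₂ Y)).S) ∉
        ChStar (restrict I (insert s₂ Y)) ∧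
      (⟨s₂, by simp⟩ : (restrict I (insert s₁ (insert s₂ Y))).S) ∈
        ChStar (restrict I (insert s₁ (insert s₂ Y))) := by
  refine ⟨I₀, Y₀, 3, 4, by decide, by decide, by decide, ?_, ?_⟩
  · exact (mem_chStar_iff_of_sort_reverse_eq J₁_sort_reverse
      ⟨W₁, W₁_balancedRep, by decide⟩).not.2 J₁_not_balancedRep_cover
  · exact (mem_chStar_iff_of_sort_reverse_eq J₂_sort_reverse
      ⟨W₂, W₂_balancedRep, by decide⟩).2 ⟨W₂, W₂_balancedRep, by decide⟩
end
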